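/- With notation as in the low-rank decomposition, the rank-r truncation error satisfies ‖(Γ_e + Γ_ε)^{-1} − (Γ_e^{-1} − V_r D_r V_rᵀ)‖ ≤ ‖Γ_e^{-1}‖ · Σ_{i=r+1}^p λ_i/(1+λ_i), where V_r collects the first r Γ_e-orthonormal generalized eigenvectors (eigenvalues sorted decreasingly) and D_r = diag(λ_i/(1+λ_i)) for i ≤ r, and ‖·‖ is the spectral norm. -/

import Mathlib

open Matrix
open scoped Matrix.Norms.L2Operator

/-- Euclidean norm of a plain vector. -/
noncomputable def eNaux {p : ℕ} (x : Fin p → ℝ) : ℝ :=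
  ‖(WithLp.equiv 2 (Fin p → ℝ)).symm x‖

lemma eNaux_nonneg {p : ℕ} (x : Fin p → ℝ) : 0 ≤ eNaux x := norm_nonneg _

lemma eNaux_sq {p : ℕ} (x : Fin p → ℝ) : eNaux x ^ 2 = x ⬝ᵥ x := by
  rw [eNaux, EuclideanSpace.norm_sq_eq]
  simp [dotProduct, sq]

lemma eNaux_CS {p : ℕ} (x y : Fin p → ℝ) : x ⬝ᵥ y ≤ eNaux x * eNaux y := by
  have := real_inner_le_norm ((WithLp.equiv 2 (Fin p → ℝ)).symm x)
    ((WithLp.equiv 2 (Fin p → ℝ)).symm y)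
  simpa [PiLp.inner_apply, dotProduct, eNaux, mul_comm] using this

lemma eNaux_mulVec {p : ℕ} (A : Matrix (Fin p) (Fin p) ℝ) (x : Fin p → ℝ) :
    eNaux (A *ᵥ x) ≤ ‖A‖ * eNaux x :=
  A.l2_opNorm_mulVec ((WithLp.equiv 2 (Fin p → ℝ)).symm x)

lemma eNaux_smul {p : ℕ} (c : ℝ) (x : Fin p → ℝ) : eNaux (c • x) = |c| * eNaux x := by
  rw [eNaux, eNaux]
  have : (WithLp.equiv 2 (Fin p → ℝ)).symm (c • x)
      = c • (WithLp.equiv 2 (Fin p → ℝ)).symm x := rfl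
  rw [this, norm_smul, Real.norm_eq_abs]

lemma vecMulVec_mulVec_aux {p : ℕ} (x y z : Fin p → ℝ) :
    vecMulVec x y *ᵥ z = (y ⬝ᵥ z) • x := by
  ext i
  simp [vecMulVec, mulVec, dotProduct, Finset.mul_sum, mul_comm, mul_left_comm]

lemma norm_vecMulVec_le_aux {p : ℕ} (x : Fin p → ℝ) :
    ‖vecMulVec x x‖ ≤ eNaux x ^ 2 := by
  rw [Matrix.l2_opNorm_def]
  refine ContinuousLinearMap.opNorm_le_bound _ (by positivity) fun y => ?_
  show ‖(vecMulVec x x).toEuclideanLin y‖ ≤ eNaux x ^ 2 * ‖y‖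
  rw [Matrix.toEuclideanLin_apply, vecMulVec_mulVec_aux]
  set z : Fin p → ℝ := (WithLp.equiv 2 (Fin p → ℝ)) y with hz
  have h1 : ‖(WithLp.equiv 2 (Fin p → ℝ)).symm ((x ⬝ᵥ z) • x)‖ = |x ⬝ᵥ z| * eNaux x :=
    eNaux_smul _ _
  rw [show WithLp.toLp 2 ((x ⬝ᵥ y.ofLp) • x) = (WithLp.equiv 2 (Fin p → ℝ)).symm ((x ⬝ᵥ z) • x) from rfl, h1]
  have hzy : eNaux z = ‖y‖ := rfl
  have hcs : |x ⬝ᵥ z| ≤ eNaux x * eNaux z := by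
    rcases abs_cases (x ⬝ᵥ z) with ⟨h, _⟩ | ⟨h, _⟩
    · rw [h]; exact eNaux_CS x z
    · rw [h]
      have hle : x ⬝ᵥ (-z) ≤ eNaux x * eNaux (-z) := eNaux_CS x (-z)
      have hneg : eNaux (-z) = eNaux z := by
        have := eNaux_smul (-1 : ℝ) z; simpa using this
      simpa [hneg, dotProduct_neg] using hle
  calc |x ⬝ᵥ z| * eNaux x ≤ (eNaux x * eNaux z) * eNaux x :=
        mul_le_mul_of_nonneg_right hcs (norm_nonneg _)
    _ = eNaux x ^ 2 * ‖y‖ := by rw [← hzy]; ring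

lemma dotAA_aux {p : ℕ} (A : Matrix (Fin p) (Fin p) ℝ) (y z : Fin p → ℝ) :
    (A *ᵥ y) ⬝ᵥ (A *ᵥ z) = y ⬝ᵥ ((Aᵀ * A) *ᵥ z) := by
  rw [← Matrix.mulVec_mulVec, Matrix.dotProduct_mulVec y, Matrix.vecMul_transpose]

lemma spectral_sum_aux {p : ℕ} (v : Fin p → Fin p → ℝ) (d : Fin p → ℝ) :
    (Matrix.of v)ᵀ * (Matrix.diagonal d * Matrix.of v)
      = ∑ i, d i • vecMulVec (v i) (v i) := by
  ext j k
  simp only [Matrix.mul_apply, Matrix.diagonal_apply, Matrix.sum_apply, Matrix.smul_apply,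
    vecMulVec_apply, Matrix.transpose_apply, Matrix.of_apply, smul_eq_mul,
    ite_mul, zero_mul, Finset.sum_ite_eq, Finset.mem_univ, if_true]
  exact Finset.sum_congr rfl fun i _ => by ring

lemma eNsq_le_aux {p : ℕ} (Γe A : Matrix (Fin p) (Fin p) ℝ) (x : Fin p → ℝ)
    (hB : Γe * (Aᵀ * A) = 1) (hBinv : Γe⁻¹ = Aᵀ * A)
    (hx1 : x ⬝ᵥ (Γe *ᵥ x) = 1) :
    eNaux x ^ 2 ≤ ‖Γe⁻¹‖ := by
  set w : Fin p → ℝ := Γe *ᵥ x with hw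
  have hBΓ : (Aᵀ * A) * Γe = 1 := mul_eq_one_comm.mp hB
  have hxw : (Aᵀ * A) *ᵥ w = x := by
    rw [hw, Matrix.mulVec_mulVec, hBΓ, Matrix.one_mulVec]
  have hxx : x ⬝ᵥ x = (A *ᵥ x) ⬝ᵥ (A *ᵥ w) := by rw [dotAA_aux, hxw]
  have hww : (A *ᵥ w) ⬝ᵥ (A *ᵥ w) = 1 := by
    rw [dotAA_aux, hxw, hw, dotProduct_comm]; exact hx1
  have hxAx : (A *ᵥ x) ⬝ᵥ (A *ᵥ x) = x ⬝ᵥ (Γe⁻¹ *ᵥ x) := by rw [dotAA_aux, hBinv]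
  set a := eNaux x with ha
  set b := eNaux (A *ᵥ x) with hb
  set d := eNaux (A *ᵥ w) with hd
  have ha0 : 0 ≤ a := eNaux_nonneg x
  have hb0 : 0 ≤ b := eNaux_nonneg _
  have hd0 : 0 ≤ d := eNaux_nonneg _
  have hnB : 0 ≤ ‖Γe⁻¹‖ := norm_nonneg _
  have hd1 : d = 1 := by
    have h2 : d ^ 2 = 1 := by rw [hd, eNaux_sq]; exact hww
    nlinarith
  have step1 : a ^ 2 ≤ b := by
    have hcs := eNaux_CS (A *ᵥ x) (A *ᵥ w)
    rw [← hb, ← hd, hd1, mul_one] at hcs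
    calc a ^ 2 = x ⬝ᵥ x := eNaux_sq x
      _ = (A *ᵥ x) ⬝ᵥ (A *ᵥ w) := hxx
      _ ≤ b := hcs
  have step2 : b ^ 2 ≤ ‖Γe⁻¹‖ * a ^ 2 := by
    have h1 : b ^ 2 = x ⬝ᵥ (Γe⁻¹ *ᵥ x) := by rw [hb, eNaux_sq]; exact hxAx
    have h2 : x ⬝ᵥ (Γe⁻¹ *ᵥ x) ≤ a * eNaux (Γe⁻¹ *ᵥ x) := eNaux_CS _ _
    have h3 : eNaux (Γe⁻¹ *ᵥ x) ≤ ‖Γe⁻¹‖ * a := eNaux_mulVec _ _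
    calc b ^ 2 = x ⬝ᵥ (Γe⁻¹ *ᵥ x) := h1
      _ ≤ a * eNaux (Γe⁻¹ *ᵥ x) := h2
      _ ≤ a * (‖Γe⁻¹‖ * a) := mul_le_mul_of_nonneg_left h3 ha0
      _ = ‖Γe⁻¹‖ * a ^ 2 := by ring
  rcases eq_or_lt_of_le ha0 with h | h
  · rw [← h]; simpa using hnB
  · nlinarith

theorem low_rank_truncation_error_bound {p : ℕ}
    (Γe Γε : Matrix (Fin p) (Fin p) ℝ)
    (hΓe : Γe.PosDef) (hΓε : Γε.PosSemidef)
    (lam : Fin p → ℝ) (v : Fin p → Fin p → ℝ)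
    (hlam : ∀ i, 0 ≤ lam i)
    (hsort : ∀ i j : Fin p, i ≤ j → lam j ≤ lam i)
    (heig : ∀ i, Γε *ᵥ v i = lam i • (Γe *ᵥ v i))
    (horth : ∀ i j, v i ⬝ᵥ (Γe *ᵥ v j) = if i = j then 1 else 0)
    (r : ℕ) :
    ‖(Γe + Γε)⁻¹ -
        (Γe⁻¹ - ∑ i ∈ Finset.univ.filter (fun i : Fin p => (i : ℕ) < r),
          (lam i / (1 + lam i)) • vecMulVec (v i) (v i))‖
      ≤ ‖Γe⁻¹‖ * ∑ i ∈ Finset.univ.filter (fun i : Fin p => r ≤ (i : ℕ)),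
          lam i / (1 + lam i) := by
  set A : Matrix (Fin p) (Fin p) ℝ := Matrix.of v with hA
  have hpos : ∀ i, (0:ℝ) < 1 + lam i := fun i => by have := hlam i; linarith
  have h_orth : A * (Γe * Aᵀ) = 1 := by
    ext i j
    have := horth i j
    simpa [Matrix.mul_apply, mulVec, dotProduct, Matrix.one_apply, hA] using this
  have h_eig : Γε * Aᵀ = (Γe * Aᵀ) * Matrix.diagonal lam := by
    ext k j
    rw [Matrix.mul_diagonal]
    have := congrFun (heig j) k
    simp only [mulVec, dotProduct, Pi.smul_apply, smul_eq_mul] at this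
    simp [Matrix.mul_apply, hA, this, mul_comm]
  have hA1 : (Γe * Aᵀ) * A = 1 := mul_eq_one_comm.mp h_orth
  have hB : Γe * (Aᵀ * A) = 1 := by rw [← Matrix.mul_assoc]; exact hA1
  have hBinv : Γe⁻¹ = Aᵀ * A := Matrix.inv_eq_right_inv hB
  have hdiag1 : Matrix.diagonal (fun i => 1 + lam i)
      = (1 : Matrix (Fin p) (Fin p) ℝ) + Matrix.diagonal lam := by
    rw [← Matrix.diagonal_one, Matrix.diagonal_add]
  have hsum : (Γe + Γε) * Aᵀ = (Γe * Aᵀ) * Matrix.diagonal (fun i => 1 + lam i) := by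
    rw [Matrix.add_mul, h_eig, hdiag1, Matrix.mul_add, Matrix.mul_one]
  have hE : (Γe + Γε) * (Aᵀ * (Matrix.diagonal (fun i => (1 + lam i)⁻¹) * A)) = 1 := by
    calc (Γe + Γε) * (Aᵀ * (Matrix.diagonal (fun i => (1 + lam i)⁻¹) * A))
        = ((Γe + Γε) * Aᵀ) * Matrix.diagonal (fun i => (1 + lam i)⁻¹) * A := by
          rw [Matrix.mul_assoc, Matrix.mul_assoc]
      _ = (Γe * Aᵀ) * (Matrix.diagonal (fun i => 1 + lam i) *
            Matrix.diagonal (fun i => (1 + lam i)⁻¹)) * A := by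
          rw [hsum, Matrix.mul_assoc (Γe * Aᵀ)]
      _ = (Γe * Aᵀ) * A := by
          rw [Matrix.diagonal_mul_diagonal]
          have : (fun i => (1 + lam i) * (1 + lam i)⁻¹) = fun _ => (1:ℝ) := by
            funext i; exact mul_inv_cancel₀ (hpos i).ne'
          rw [this, Matrix.diagonal_one, Matrix.mul_one]
      _ = 1 := hA1
  have hEinv : (Γe + Γε)⁻¹ = Aᵀ * (Matrix.diagonal (fun i => (1 + lam i)⁻¹) * A) :=
    Matrix.inv_eq_right_inv hE
  have hfun : (fun i => (1:ℝ) - (1 + lam i)⁻¹) = fun i => lam i / (1 + lam i) := by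
    funext i
    have h := (hpos i).ne'
    field_simp
    ring
  have hdsub : A - Matrix.diagonal (fun i => (1 + lam i)⁻¹) * A
      = Matrix.diagonal (fun i => lam i / (1 + lam i)) * A := by
    calc A - Matrix.diagonal (fun i => (1 + lam i)⁻¹) * A
        = 1 * A - Matrix.diagonal (fun i => (1 + lam i)⁻¹) * A := by rw [Matrix.one_mul]
      _ = (1 - Matrix.diagonal (fun i => (1 + lam i)⁻¹)) * A := (Matrix.sub_mul _ _ _).symm
      _ = Matrix.diagonal (fun i => lam i / (1 + lam i)) * A := by
          rw [← Matrix.diagonal_one, Matrix.diagonal_sub, hfun]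
  have hdiff : Γe⁻¹ - (Γe + Γε)⁻¹
      = ∑ i, (lam i / (1 + lam i)) • vecMulVec (v i) (v i) := by
    rw [hBinv, hEinv, ← Matrix.mul_sub, hdsub, hA]
    exact spectral_sum_aux v _
  -- split the full sum
  set f : Fin p → Matrix (Fin p) (Fin p) ℝ :=
    fun i => (lam i / (1 + lam i)) • vecMulVec (v i) (v i) with hf
  have hfilter : (Finset.univ.filter fun i : Fin p => r ≤ (i:ℕ))
      = Finset.univ.filter fun i : Fin p => ¬ (i:ℕ) < r := by
    simp [not_lt]
  have hsplit : (∑ i ∈ Finset.univ.filter (fun i : Fin p => (i:ℕ) < r), f i)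
      + (∑ i ∈ Finset.univ.filter (fun i : Fin p => r ≤ (i:ℕ)), f i) = ∑ i, f i := by
    rw [hfilter]
    exact Finset.sum_filter_add_sum_filter_not _ _ f
  have hkey : (Γe + Γε)⁻¹ -
      (Γe⁻¹ - ∑ i ∈ Finset.univ.filter (fun i : Fin p => (i:ℕ) < r), f i)
      = -(∑ i ∈ Finset.univ.filter (fun i : Fin p => r ≤ (i:ℕ)), f i) := by
    have h3 : Γe⁻¹ - (Γe + Γε)⁻¹
        = (∑ i ∈ Finset.univ.filter (fun i : Fin p => (i:ℕ) < r), f i)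
          + (∑ i ∈ Finset.univ.filter (fun i : Fin p => r ≤ (i:ℕ)), f i) := by
      rw [hdiff, ← hsplit]
    calc (Γe + Γε)⁻¹ -
        (Γe⁻¹ - ∑ i ∈ Finset.univ.filter (fun i : Fin p => (i:ℕ) < r), f i)
        = (∑ i ∈ Finset.univ.filter (fun i : Fin p => (i:ℕ) < r), f i)
          - (Γe⁻¹ - (Γe + Γε)⁻¹) := by abel
      _ = (∑ i ∈ Finset.univ.filter (fun i : Fin p => (i:ℕ) < r), f i)
          - ((∑ i ∈ Finset.univ.filter (fun i : Fin p => (i:ℕ) < r), f i)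
            + (∑ i ∈ Finset.univ.filter (fun i : Fin p => r ≤ (i:ℕ)), f i)) := by rw [h3]
      _ = -(∑ i ∈ Finset.univ.filter (fun i : Fin p => r ≤ (i:ℕ)), f i) := by abel
  rw [hkey, norm_neg]
  have hW : ∀ i, ‖vecMulVec (v i) (v i)‖ ≤ ‖Γe⁻¹‖ := fun i => by
    have h1 := norm_vecMulVec_le_aux (v i)
    have h2 : eNaux (v i) ^ 2 ≤ ‖Γe⁻¹‖ := by
      refine eNsq_le_aux Γe A (v i) hB hBinv ?_
      have := horth i i; simpa using this
    exact h1.trans h2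
  have hc : ∀ i, 0 ≤ lam i / (1 + lam i) :=
    fun i => div_nonneg (hlam i) (hpos i).le
  calc ‖∑ i ∈ Finset.univ.filter (fun i : Fin p => r ≤ (i:ℕ)), f i‖
      ≤ ∑ i ∈ Finset.univ.filter (fun i : Fin p => r ≤ (i:ℕ)), ‖f i‖ :=
        norm_sum_le _ _
    _ ≤ ∑ i ∈ Finset.univ.filter (fun i : Fin p => r ≤ (i:ℕ)),
          (lam i / (1 + lam i)) * ‖Γe⁻¹‖ := by
        refine Finset.sum_le_sum fun i _ => ?_
        rw [hf]
        rw [norm_smul, Real.norm_eq_abs, abs_of_nonneg (hc i)]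
        exact mul_le_mul_of_nonneg_left (hW i) (hc i)
    _ = ‖Γe⁻¹‖ * ∑ i ∈ Finset.univ.filter (fun i : Fin p => r ≤ (i:ℕ)),
          lam i / (1 + lam i) := by
        rw [← Finset.sum_mul, mul_comm]
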